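/- arXiv:2602.19095 — 2 statements merged into one kernel-verified Lean document; each statement's English description precedes it below -/
import Mathlib

section
/- Let F, G, H be simple graphs, let (B¹_g)_{g∈V(G)} be a G-decomposition of F (i.e. it satisfies (D1), (D2), (D3) for F over G), and let (B²_h)_{h∈V(H)} be an H-decomposition of G (i.e. it satisfies (D1), (D2), (D3) for G over H). For each h ∈ V(H) define B̃_h := ⋃_{g ∈ B²_h} B¹_g. Then the family (B̃_h)_{h∈V(H)} is an H-decomposition of F, i.e. it satisfies (D1), (D2), (D3) for F over H. -/
/-!
The bags of `F` over `H` containing a vertex `f` are exactly the union, over the bags of `F`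
over `G` containing `f`, of the bags of `G` over `H` containing them. That union is connected in
`H`: it is a union of connected sets indexed by a connected set of vertices of `G`, and the sets
attached to adjacent vertices of `G` meet or are joined by an edge of `H`. The same "meet or are
joined by an edge" relation carries the edge condition from `G` to `H`.
-/

namespace SimpleGraph

variable {β γ : Type*} {G : SimpleGraph β} {H : SimpleGraph γ}

def Touches (H : SimpleGraph γ) (s t : Set γ) : Prop :=
  (s ∩ t).Nonempty ∨ ∃ a b, H.Adj a b ∧ a ∈ s ∧ b ∈ t

theorem Touches.mono {s t s' t' : Set γ} (hst : H.Touches s t) (hs : s ⊆ s') (ht : t ⊆ t') :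
    H.Touches s' t' := by
  rcases hst with hst | ⟨a, b, hab, ha, hb⟩
  · exact Or.inl (hst.mono (Set.inter_subset_inter hs ht))
  · exact Or.inr ⟨a, b, hab, hs ha, ht hb⟩

theorem Touches.induce_union_connected {s t : Set γ} (hst : H.Touches s t)
    (hs : (H.induce s).Connected) (ht : (H.induce t).Connected) :
    (H.induce (s ∪ t)).Connected := by
  rcases hst with hst | ⟨a, b, hab, ha, hb⟩
  · exact SimpleGraph.induce_union_connected hs.preconnected ht.preconnected hst
  · exact connected_induce_union hs.preconnected ht.preconnected ha hb hab

theorem Connected.reachable_of_subset {s U : Set γ} (hs : (H.induce s).Connected) (hsU : s ⊆ U)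
    {a b : γ} (ha : a ∈ s) (hb : b ∈ s) :
    (H.induce U).Reachable ⟨a, hsU ha⟩ ⟨b, hsU hb⟩ :=
  (hs.preconnected ⟨a, ha⟩ ⟨b, hb⟩).map (H.induceHomOfLE hsU).toHom

theorem Touches.biUnion {S S' : Set β} {T : β → Set γ} (hSS' : G.Touches S S')
    (hT : ∀ g ∈ S, (T g).Nonempty)
    (hST : ∀ g ∈ S, ∀ g' ∈ S', G.Adj g g' → H.Touches (T g) (T g')) :
    H.Touches (⋃ g ∈ S, T g) (⋃ g ∈ S', T g) := by
  rcases hSS' with ⟨g, hg, hg'⟩ | ⟨g, g', hgg', hg, hg'⟩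
  · obtain ⟨a, ha⟩ := hT g hg
    exact Or.inl ⟨a, Set.mem_biUnion hg ha, Set.mem_biUnion hg' ha⟩
  · exact (hST g hg g' hg' hgg').mono (Set.subset_biUnion_of_mem hg)
      (Set.subset_biUnion_of_mem hg')

theorem induce_biUnion_connected {S : Set β} {T : β → Set γ} (hS : (G.induce S).Connected)
    (hT : ∀ g ∈ S, (H.induce (T g)).Connected)
    (hST : ∀ g ∈ S, ∀ g' ∈ S, G.Adj g g' → H.Touches (T g) (T g')) :
    (H.induce (⋃ g ∈ S, T g)).Connected := by
  have hsub : ∀ g ∈ S, T g ⊆ ⋃ g ∈ S, T g := fun g hg => Set.subset_biUnion_of_mem hg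
  have reachable_along : ∀ {x y : S}, (G.induce S).Walk x y → ∀ a (ha : a ∈ T x) b (hb : b ∈ T y),
      (H.induce (⋃ g ∈ S, T g)).Reachable ⟨a, hsub x x.2 ha⟩ ⟨b, hsub y y.2 hb⟩ := by
    intro x y p
    induction p with
    | @nil x => exact fun a ha b hb => (hT _ x.2).reachable_of_subset (hsub _ x.2) ha hb
    | @cons x y z hxy p ih =>
      intro a ha b hb
      obtain ⟨⟨c, hc⟩⟩ := (hT _ y.2).nonempty
      have hxy_union := (hST _ x.2 _ y.2 hxy).induce_union_connected (hT _ x.2) (hT _ y.2)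
      exact (hxy_union.reachable_of_subset (Set.union_subset (hsub _ x.2) (hsub _ y.2))
        (Or.inl ha) (Or.inr hc)).trans (ih c hc b hb)
  obtain ⟨⟨g, hg⟩⟩ := hS.nonempty
  obtain ⟨⟨a, ha⟩⟩ := (hT g hg).nonempty
  refine (connected_iff _).2 ⟨?_, ⟨⟨a, hsub g hg ha⟩⟩⟩
  rintro ⟨a, ha⟩ ⟨b, hb⟩
  obtain ⟨x, hx, hax⟩ := Set.mem_iUnion₂.1 ha
  obtain ⟨y, hy, hby⟩ := Set.mem_iUnion₂.1 hb
  exact reachable_along (hS.preconnected ⟨x, hx⟩ ⟨y, hy⟩).some a hax b hby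

end SimpleGraph

theorem setOf_mem_biUnion_eq {α β γ : Type*} (B1 : β → Set α) (B2 : γ → Set β) (f : α) :
    {h | f ∈ ⋃ g ∈ B2 h, B1 g} = ⋃ g ∈ {g | f ∈ B1 g}, {h | g ∈ B2 h} := by
  ext h
  simp only [Set.mem_ofPred_eq, Set.mem_iUnion, exists_prop, and_comm]

theorem composition_of_decompositions_general
    {α β γ : Type*} (F : SimpleGraph α) (G : SimpleGraph β) (H : SimpleGraph γ)
    (B1 : β → Set α) (B2 : γ → Set β)
    -- (D1), (D2), (D3) for F over G
    (hD2₁ : ∀ f f' : α, F.Adj f f' →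
      (∃ g : β, f ∈ B1 g ∧ f' ∈ B1 g) ∨
      (∃ g g' : β, G.Adj g g' ∧ f ∈ B1 g ∧ f' ∈ B1 g'))
    (hD3₁ : ∀ f : α, (G.induce {g : β | f ∈ B1 g}).Connected)
    -- (D1), (D2), (D3) for G over H
    (hD2₂ : ∀ g g' : β, G.Adj g g' →
      (∃ h : γ, g ∈ B2 h ∧ g' ∈ B2 h) ∨
      (∃ h h' : γ, H.Adj h h' ∧ g ∈ B2 h ∧ g' ∈ B2 h'))
    (hD3₂ : ∀ g : β, (H.induce {h : γ | g ∈ B2 h}).Connected) :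
    -- (D1), (D2), (D3) for F over H with bags ⋃_{g ∈ B2 h} B1 g
    (∀ f : α, ∃ h : γ, f ∈ ⋃ g ∈ B2 h, B1 g) ∧
    (∀ f f' : α, F.Adj f f' →
      (∃ h : γ, f ∈ (⋃ g ∈ B2 h, B1 g) ∧ f' ∈ (⋃ g ∈ B2 h, B1 g)) ∨
      (∃ h h' : γ, H.Adj h h' ∧ f ∈ (⋃ g ∈ B2 h, B1 g) ∧ f' ∈ (⋃ g ∈ B2 h', B1 g))) ∧
    (∀ f : α, (H.induce {h : γ | f ∈ ⋃ g ∈ B2 h, B1 g}).Connected) := by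
  have hD3 : ∀ f, (H.induce {h | f ∈ ⋃ g ∈ B2 h, B1 g}).Connected := fun f => by
    rw [setOf_mem_biUnion_eq]
    exact SimpleGraph.induce_biUnion_connected (hD3₁ f) (fun g _ => hD3₂ g)
      (fun g _ g' _ => hD2₂ g g')
  refine ⟨fun f => Set.nonempty_coe_sort.1 (hD3 f).nonempty, fun f f' hff' => ?_, hD3⟩
  show H.Touches {h | f ∈ ⋃ g ∈ B2 h, B1 g} {h | f' ∈ ⋃ g ∈ B2 h, B1 g}
  rw [setOf_mem_biUnion_eq, setOf_mem_biUnion_eq]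
  exact SimpleGraph.Touches.biUnion (hD2₁ f f' hff')
    (fun g _ => Set.nonempty_coe_sort.1 (hD3₂ g).nonempty) (fun g _ g' _ => hD2₂ g g')

/-- Composing a `G`-decomposition of `F` with an `H`-decomposition of `G`
(with bags `B̃_h := ⋃_{g ∈ B²_h} B¹_g`) yields an `H`-decomposition of `F`. -/
theorem composition_of_decompositions
    {α β γ : Type*} (F : SimpleGraph α) (G : SimpleGraph β) (H : SimpleGraph γ)
    (B1 : β → Set α) (B2 : γ → Set β)
    -- (D1), (D2), (D3) for F over G
    (hD1₁ : ∀ f : α, ∃ g : β, f ∈ B1 g)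
    (hD2₁ : ∀ f f' : α, F.Adj f f' →
      (∃ g : β, f ∈ B1 g ∧ f' ∈ B1 g) ∨
      (∃ g g' : β, G.Adj g g' ∧ f ∈ B1 g ∧ f' ∈ B1 g'))
    (hD3₁ : ∀ f : α, (G.induce {g : β | f ∈ B1 g}).Connected)
    -- (D1), (D2), (D3) for G over H
    (hD1₂ : ∀ g : β, ∃ h : γ, g ∈ B2 h)
    (hD2₂ : ∀ g g' : β, G.Adj g g' →
      (∃ h : γ, g ∈ B2 h ∧ g' ∈ B2 h) ∨
      (∃ h h' : γ, H.Adj h h' ∧ g ∈ B2 h ∧ g' ∈ B2 h'))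
    (hD3₂ : ∀ g : β, (H.induce {h : γ | g ∈ B2 h}).Connected) :
    -- (D1), (D2), (D3) for F over H with bags ⋃_{g ∈ B2 h} B1 g
    (∀ f : α, ∃ h : γ, f ∈ ⋃ g ∈ B2 h, B1 g) ∧
    (∀ f f' : α, F.Adj f f' →
      (∃ h : γ, f ∈ (⋃ g ∈ B2 h, B1 g) ∧ f' ∈ (⋃ g ∈ B2 h, B1 g)) ∨
      (∃ h h' : γ, H.Adj h h' ∧ f ∈ (⋃ g ∈ B2 h, B1 g) ∧ f' ∈ (⋃ g ∈ B2 h', B1 g))) ∧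
    (∀ f : α, (H.induce {h : γ | f ∈ ⋃ g ∈ B2 h, B1 g}).Connected) :=
  composition_of_decompositions_general F G H B1 B2 hD2₁ hD3₁ hD2₂ hD3₂
end

section
/- Let G and H be simple graphs and let (B_h)_{h∈V(H)} be a family of subsets of V(G) satisfying conditions (D1), (D2), and (D3) for G over H. Let A be a nonempty subset of V(G) such that the subgraph of G induced by A is connected. Then the set {h ∈ V(H) : g ∈ B_h for some g ∈ A} induces a connected subgraph of H. -/
/-!
For `g ∈ A` write `S g = {h | g ∈ B h}`. By (D3) each `S g` induces a connected subgraph of `H`,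
and by (D2) so does `S g ∪ S g'` whenever `g g'` is an edge of `G`: the two connected pieces
either share a vertex or are joined by an edge of `H`. Following a walk of `G[A]`, any two
vertices of `⋃_{g ∈ A} S g` are therefore joined inside this union.
-/

namespace SimpleGraph

variable {V W : Type*} {G : SimpleGraph V} {H : SimpleGraph W}

theorem Preconnected.reachable_induce_of_subset {s t : Set W} (hs : (H.induce s).Preconnected)
    (hst : s ⊆ t) {x y : W} (hx : x ∈ s) (hy : y ∈ s) :
    (H.induce t).Reachable ⟨x, hst hx⟩ ⟨y, hst hy⟩ :=
  (hs ⟨x, hx⟩ ⟨y, hy⟩).map (induceHomOfLE H hst).toHom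

theorem Connected.induce_iUnion_connected {S : V → Set W} (hG : G.Connected)
    (hS : ∀ v, (H.induce (S v)).Connected)
    (hadj : ∀ ⦃v w⦄, G.Adj v w → (H.induce (S v ∪ S w)).Preconnected) :
    (H.induce (⋃ v, S v)).Connected := by
  have reach : ∀ v w, G.Reachable v w → ∀ x (hx : x ∈ S v) y (hy : y ∈ S w),
      (H.induce (⋃ v, S v)).Reachable ⟨x, Set.mem_iUnion_of_mem v hx⟩
        ⟨y, Set.mem_iUnion_of_mem w hy⟩ := by
    intro v w hvw
    rw [reachable_iff_reflTransGen] at hvw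
    induction hvw with
    | refl =>
      exact fun x hx y hy => (hS v).preconnected.reachable_induce_of_subset
        (Set.subset_iUnion S v) hx hy
    | @tail w w' _ hww' ih =>
      intro x hx y hy
      obtain ⟨⟨z, hz⟩⟩ := (hS w).nonempty
      exact (ih x hx z hz).trans <| (hadj hww').reachable_induce_of_subset
        (Set.union_subset (Set.subset_iUnion S w) (Set.subset_iUnion S w'))
        (Or.inl hz) (Or.inr hy)
  rw [connected_iff]
  refine ⟨?_, ?_⟩
  · rintro ⟨x, hx⟩ ⟨y, hy⟩
    obtain ⟨v, hxv⟩ := Set.mem_iUnion.mp hx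
    obtain ⟨w, hyw⟩ := Set.mem_iUnion.mp hy
    exact reach v w (hG v w) x hxv y hyw
  · obtain ⟨v⟩ := hG.nonempty
    obtain ⟨⟨x, hx⟩⟩ := (hS v).nonempty
    exact ⟨⟨x, Set.mem_iUnion_of_mem v hx⟩⟩

end SimpleGraph

theorem connected_set_bags_connected_general
    {β γ : Type*} (G : SimpleGraph β) (H : SimpleGraph γ) (B : γ → Set β)
    (hD2 : ∀ g g' : β, G.Adj g g' →
      (∃ h : γ, g ∈ B h ∧ g' ∈ B h) ∨
      (∃ h h' : γ, H.Adj h h' ∧ g ∈ B h ∧ g' ∈ B h'))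
    (hD3 : ∀ g : β, (H.induce {h : γ | g ∈ B h}).Connected)
    (A : Set β) (hAconn : (G.induce A).Connected) :
    (H.induce {h : γ | ∃ g ∈ A, g ∈ B h}).Connected := by
  have hadj : ∀ ⦃g g'⦄, G.Adj g g' →
      (H.induce ({h | g ∈ B h} ∪ {h | g' ∈ B h})).Preconnected := by
    intro g g' hgg'
    rcases hD2 g g' hgg' with ⟨h, hg, hg'⟩ | ⟨h, h', hhh', hg, hg'⟩
    · exact (H.induce_union_connected (hD3 g).preconnected (hD3 g').preconnected
        ⟨h, hg, hg'⟩).preconnected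
    · exact (H.connected_induce_union (hD3 g).preconnected (hD3 g').preconnected
        hg hg' hhh').preconnected
  have hunion : {h | ∃ g ∈ A, g ∈ B h} = ⋃ g : A, {h | g.1 ∈ B h} := by
    ext; simp
  rw [hunion]
  exact hAconn.induce_iUnion_connected (fun g => hD3 g) fun _ _ hgg' => hadj hgg'

/-- If `(B_h)` satisfies (D1), (D2), (D3) for `G` over `H` and
`A ⊆ V(G)` is nonempty with `G[A]` connected, then
`{h : ∃ g ∈ A, g ∈ B_h}` induces a connected subgraph of `H`. -/
theorem connected_set_bags_connected
    {β γ : Type*} (G : SimpleGraph β) (H : SimpleGraph γ) (B : γ → Set β)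
    (hD1 : ∀ g : β, ∃ h : γ, g ∈ B h)
    (hD2 : ∀ g g' : β, G.Adj g g' →
      (∃ h : γ, g ∈ B h ∧ g' ∈ B h) ∨
      (∃ h h' : γ, H.Adj h h' ∧ g ∈ B h ∧ g' ∈ B h'))
    (hD3 : ∀ g : β, (H.induce {h : γ | g ∈ B h}).Connected)
    (A : Set β) (hA : A.Nonempty) (hAconn : (G.induce A).Connected) :
    (H.induce {h : γ | ∃ g ∈ A, g ∈ B h}).Connected :=
  connected_set_bags_connected_general G H B hD2 hD3 A hAconn
end
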